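/- Let R be the free noncommutative F-algebra on two generators X₁, X₂ over F = ℚ(A), with the endomorphisms T₁, T₁⁻, T₂, T₂⁻ and the two-sided ideal J as above. Then for every x ∈ R, the elements T₁(T₁⁻(x)) − x, T₁⁻(T₁(x)) − x, T₂(T₂⁻(x)) − x and T₂⁻(T₂(x)) − x all belong to J. Consequently, the induced endomorphisms τ₁ and τ₂ of B = R/J are F-algebra automorphisms of B, with inverses induced by T₁⁻ and T₂⁻ respectively. -/

import Mathlib

/-- `F = ℚ(A)`, the field of rational functions in one variable over `ℚ`. -/
noncomputable abbrev F : Type := RatFunc ℚ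

/-- The variable `A ∈ ℚ(A)`. -/
noncomputable def A : F := RatFunc.X

/-- The deformed bracket `[x,y]_A = A·(x*y) − A⁻¹·(y*x)` in an `F`-algebra. -/
noncomputable def brA {S : Type*} [Ring S] [Algebra F S] (x y : S) : S :=
  A • (x * y) - A⁻¹ • (y * x)

/-- `R`, the free noncommutative `F`-algebra on two generators. -/
noncomputable abbrev R : Type := FreeAlgebra F (Fin 2)

/-- The first generator `X₁`. -/
noncomputable def X1 : R := FreeAlgebra.ι F 0

/-- The second generator `X₂`. -/
noncomputable def X2 : R := FreeAlgebra.ι F 1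

/-- The generators as a function on `Fin 2`. -/
noncomputable def X : Fin 2 → R := ![X1, X2]

/-- `T₁ : X₁ ↦ X₁, X₂ ↦ [X₁,X₂]_A`. -/
noncomputable def T1 : R →ₐ[F] R := FreeAlgebra.lift F ![X1, brA X1 X2]

/-- `T₁⁻ : X₁ ↦ X₁, X₂ ↦ [X₂,X₁]_A`. -/
noncomputable def T1inv : R →ₐ[F] R := FreeAlgebra.lift F ![X1, brA X2 X1]

/-- `T₂ : X₁ ↦ [X₂,X₁]_A, X₂ ↦ X₂`. -/
noncomputable def T2 : R →ₐ[F] R := FreeAlgebra.lift F ![brA X2 X1, X2]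

/-- `T₂⁻ : X₁ ↦ [X₁,X₂]_A, X₂ ↦ X₂`. -/
noncomputable def T2inv : R →ₐ[F] R := FreeAlgebra.lift F ![brA X1 X2, X2]

/-- The two-sided ideal `J` generated by `[[X₁,X₂]_A, X₁]_A − X₂` and
`[[X₂,X₁]_A, X₂]_A − X₁`. -/
noncomputable def J : TwoSidedIdeal R :=
  TwoSidedIdeal.span {brA (brA X1 X2) X1 - X2, brA (brA X2 X1) X2 - X1}

/-- The quotient algebra `B = R/J`. -/
noncomputable abbrev B : Type := RingQuot (fun x y : R => x - y ∈ J)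

/-- The quotient map `π : R → B` as an `F`-algebra homomorphism. -/
noncomputable def pi : R →ₐ[F] B := RingQuot.mkAlgHom F (fun x y : R => x - y ∈ J)

/-!
The bracket satisfies the flexible law `[[a,b]_A,a]_A = [a,[b,a]_A]_A` (both sides equal
`(A² + A⁻²)·aba − aab − baa`). Write `a ~ b` (`BracketRel`) for `[[a,b]_A,a]_A ≡ b mod J`;
the ideal `J` says exactly `X₁ ~ X₂` and `X₂ ~ X₁`. By flexibility, `a ~ b` and `b ~ a` imply
the same two relations for the pairs `(a, [a,b]_A)` and `(a, [b,a]_A)`, which are the images of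
the generators under `T₁`, `T₁⁻`, `T₂`, `T₂⁻` (up to order); so these maps preserve `J`. On the
generators, each composite `T₁T₁⁻`, … is the identity modulo `J` by one more application of
these two facts, hence everywhere.
-/

section Bracket

variable {S : Type*} [Ring S] [Algebra F S]

lemma A_ne_zero : A ≠ 0 := RatFunc.X_ne_zero

lemma brA_sub_left (x y z : S) : brA (x - y) z = brA x z - brA y z := by
  simp only [brA, sub_mul, mul_sub, smul_sub]; abel

lemma brA_sub_right (x y z : S) : brA x (y - z) = brA x y - brA x z := by
  simp only [brA, sub_mul, mul_sub, smul_sub]; abel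

lemma brA_flexible (a b : S) : brA (brA a b) a = brA a (brA b a) := by
  simp only [brA, smul_sub, sub_mul, mul_sub, smul_mul_assoc, mul_smul_comm, smul_smul,
    mul_inv_cancel₀ A_ne_zero, inv_mul_cancel₀ A_ne_zero, one_smul, mul_assoc]
  abel

lemma map_brA {S' : Type*} [Ring S'] [Algebra F S'] (φ : S →ₐ[F] S') (x y : S) :
    φ (brA x y) = brA (φ x) (φ y) := by
  simp only [brA, map_sub, map_smul, map_mul]

lemma brA_mem_left {I : TwoSidedIdeal S} {x : S} (hx : x ∈ I) (y : S) : brA x y ∈ I := by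
  refine I.sub_mem ?_ ?_ <;> rw [Algebra.smul_def]
  · exact I.mul_mem_left _ _ (I.mul_mem_right _ _ hx)
  · exact I.mul_mem_left _ _ (I.mul_mem_left _ _ hx)

lemma brA_mem_right {I : TwoSidedIdeal S} {x : S} (hx : x ∈ I) (y : S) : brA y x ∈ I := by
  refine I.sub_mem ?_ ?_ <;> rw [Algebra.smul_def]
  · exact I.mul_mem_left _ _ (I.mul_mem_left _ _ hx)
  · exact I.mul_mem_left _ _ (I.mul_mem_right _ _ hx)

def BracketRel (I : TwoSidedIdeal S) (a b : S) : Prop := brA (brA a b) a - b ∈ I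

variable {I : TwoSidedIdeal S} {a b : S}

lemma BracketRel.left_brA (h : BracketRel I a b) : BracketRel I a (brA a b) := by
  rw [BracketRel, brA_flexible a (brA a b), ← brA_sub_right]
  exact brA_mem_right h a

lemma BracketRel.left_brA_swap (h : BracketRel I a b) : BracketRel I a (brA b a) := by
  rw [BracketRel, ← brA_sub_left, ← brA_flexible a b]
  exact brA_mem_left h a

lemma BracketRel.brA_left (hab : BracketRel I a b) (hba : BracketRel I b a) :
    BracketRel I (brA a b) a := by
  have h : brA (brA (brA a b) a) (brA a b) - brA (brA b a) b ∈ I := by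
    rw [brA_flexible b a, ← brA_sub_left]; exact brA_mem_left hab _
  rw [BracketRel, ← sub_add_sub_cancel _ (brA (brA b a) b)]
  exact I.add_mem h hba

lemma BracketRel.brA_swap_left (hab : BracketRel I a b) (hba : BracketRel I b a) :
    BracketRel I (brA b a) a := by
  have h : brA (brA (brA b a) a) (brA b a) - brA (brA b a) b ∈ I := by
    rw [brA_flexible (brA b a) a, ← brA_sub_right, ← brA_flexible a b]
    exact brA_mem_right hab _
  rw [BracketRel, ← sub_add_sub_cancel _ (brA (brA b a) b)]
  exact I.add_mem h hba

end Bracket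

lemma FreeAlgebra.sub_mem_of_forall_ι {R₀ X₀ S : Type*} [CommSemiring R₀] [Ring S]
    [Algebra R₀ S] {I : TwoSidedIdeal S} (φ ψ : FreeAlgebra R₀ X₀ →ₐ[R₀] S)
    (h : ∀ i, φ (ι R₀ i) - ψ (ι R₀ i) ∈ I) (x : FreeAlgebra R₀ X₀) : φ x - ψ x ∈ I := by
  induction x using FreeAlgebra.induction with
  | grade0 r => rw [AlgHom.commutes, AlgHom.commutes, sub_self]; exact I.zero_mem
  | grade1 i => exact h i
  | mul x y hx hy =>
    rw [map_mul, map_mul, show φ x * φ y - ψ x * ψ y = φ x * (φ y - ψ y) + (φ x - ψ x) * ψ y by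
      noncomm_ring]
    exact I.add_mem (I.mul_mem_left _ _ hy) (I.mul_mem_right _ _ hx)
  | add x y hx hy =>
    rw [map_add, map_add, add_sub_add_comm]
    exact I.add_mem hx hy

section Quotient

variable {R₀ S : Type*} [CommSemiring R₀] [Ring S] [Algebra R₀ S] (I : TwoSidedIdeal S)

noncomputable def quotMap (φ : S →ₐ[R₀] S) (hφ : ∀ x ∈ I, φ x ∈ I) :
    RingQuot (fun x y : S => x - y ∈ I) →ₐ[R₀] RingQuot (fun x y : S => x - y ∈ I) :=
  RingQuot.liftAlgHom R₀ ⟨(RingQuot.mkAlgHom R₀ _).comp φ, fun ⦃x y⦄ h =>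
    RingQuot.mkAlgHom_rel R₀ (by rw [← map_sub]; exact hφ _ h)⟩

variable {I}

lemma quotMap_comp_mkAlgHom (φ : S →ₐ[R₀] S) (hφ : ∀ x ∈ I, φ x ∈ I) :
    (quotMap I φ hφ).comp (RingQuot.mkAlgHom R₀ _) = (RingQuot.mkAlgHom R₀ _).comp φ :=
  AlgHom.ext fun x => RingQuot.liftAlgHom_mkAlgHom_apply R₀ _ _ x

lemma quotMap_comp_quotMap_eq_id {φ ψ : S →ₐ[R₀] S} (hφ : ∀ x ∈ I, φ x ∈ I)
    (hψ : ∀ x ∈ I, ψ x ∈ I) (h : ∀ x, φ (ψ x) - x ∈ I) :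
    (quotMap I φ hφ).comp (quotMap I ψ hψ) = AlgHom.id R₀ _ := by
  refine RingQuot.ringQuot_ext' R₀ _ _ ?_
  rw [AlgHom.comp_assoc, quotMap_comp_mkAlgHom, ← AlgHom.comp_assoc, quotMap_comp_mkAlgHom,
    AlgHom.comp_assoc, AlgHom.id_comp]
  ext x
  exact RingQuot.mkAlgHom_rel R₀ (s := fun x y : S => x - y ∈ I) (h x)

end Quotient

lemma bracketRel_X1_X2 : BracketRel J X1 X2 := TwoSidedIdeal.subset_span (Or.inl rfl)

lemma bracketRel_X2_X1 : BracketRel J X2 X1 := TwoSidedIdeal.subset_span (Or.inr rfl)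

lemma map_mem_J {φ : R →ₐ[F] R} (h₁₂ : BracketRel J (φ X1) (φ X2))
    (h₂₁ : BracketRel J (φ X2) (φ X1)) : ∀ x ∈ J, φ x ∈ J := by
  suffices J ≤ J.comap φ from fun x hx => (TwoSidedIdeal.mem_comap φ).mp (this hx)
  refine TwoSidedIdeal.span_le.mpr ?_
  rintro g (rfl | rfl) <;>
    simp only [SetLike.mem_coe, TwoSidedIdeal.mem_comap, map_sub, map_brA]
  exacts [h₁₂, h₂₁]

lemma sub_mem_J_of_generators {φ : R →ₐ[F] R} (h₁ : φ X1 - X1 ∈ J) (h₂ : φ X2 - X2 ∈ J) (x : R) :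
    φ x - x ∈ J :=
  FreeAlgebra.sub_mem_of_forall_ι φ (AlgHom.id F R) (Fin.forall_fin_two.mpr ⟨h₁, h₂⟩) x

lemma T1_X1 : T1 X1 = X1 := by simp [T1, X1]
lemma T1_X2 : T1 X2 = brA X1 X2 := by simp [T1, X2]
lemma T1inv_X1 : T1inv X1 = X1 := by simp [T1inv, X1]
lemma T1inv_X2 : T1inv X2 = brA X2 X1 := by simp [T1inv, X2]
lemma T2_X1 : T2 X1 = brA X2 X1 := by simp [T2, X1]
lemma T2_X2 : T2 X2 = X2 := by simp [T2, X2]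
lemma T2inv_X1 : T2inv X1 = brA X1 X2 := by simp [T2inv, X1]
lemma T2inv_X2 : T2inv X2 = X2 := by simp [T2inv, X2]

lemma T1_mem_J : ∀ x ∈ J, T1 x ∈ J := by
  refine map_mem_J ?_ ?_ <;> rw [T1_X1, T1_X2]
  exacts [bracketRel_X1_X2.left_brA, bracketRel_X1_X2.brA_left bracketRel_X2_X1]

lemma T1inv_mem_J : ∀ x ∈ J, T1inv x ∈ J := by
  refine map_mem_J ?_ ?_ <;> rw [T1inv_X1, T1inv_X2]
  exacts [bracketRel_X1_X2.left_brA_swap, bracketRel_X1_X2.brA_swap_left bracketRel_X2_X1]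

lemma T2_mem_J : ∀ x ∈ J, T2 x ∈ J := by
  refine map_mem_J ?_ ?_ <;> rw [T2_X1, T2_X2]
  exacts [bracketRel_X2_X1.brA_left bracketRel_X1_X2, bracketRel_X2_X1.left_brA]

lemma T2inv_mem_J : ∀ x ∈ J, T2inv x ∈ J := by
  refine map_mem_J ?_ ?_ <;> rw [T2inv_X1, T2inv_X2]
  exacts [bracketRel_X2_X1.brA_swap_left bracketRel_X1_X2, bracketRel_X2_X1.left_brA_swap]

lemma T1_T1inv_sub_mem_J (x : R) : T1 (T1inv x) - x ∈ J := by
  refine sub_mem_J_of_generators (φ := T1.comp T1inv) ?_ ?_ x <;>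
    simp only [AlgHom.comp_apply, T1inv_X1, T1inv_X2, map_brA, T1_X1, T1_X2, sub_self, J.zero_mem]
  exact bracketRel_X1_X2

lemma T1inv_T1_sub_mem_J (x : R) : T1inv (T1 x) - x ∈ J := by
  refine sub_mem_J_of_generators (φ := T1inv.comp T1) ?_ ?_ x <;>
    simp only [AlgHom.comp_apply, T1_X1, T1_X2, map_brA, T1inv_X1, T1inv_X2, sub_self, J.zero_mem]
  rw [← brA_flexible]
  exact bracketRel_X1_X2

lemma T2_T2inv_sub_mem_J (x : R) : T2 (T2inv x) - x ∈ J := by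
  refine sub_mem_J_of_generators (φ := T2.comp T2inv) ?_ ?_ x <;>
    simp only [AlgHom.comp_apply, T2inv_X1, T2inv_X2, map_brA, T2_X1, T2_X2, sub_self, J.zero_mem]
  exact bracketRel_X2_X1

lemma T2inv_T2_sub_mem_J (x : R) : T2inv (T2 x) - x ∈ J := by
  refine sub_mem_J_of_generators (φ := T2inv.comp T2) ?_ ?_ x <;>
    simp only [AlgHom.comp_apply, T2_X1, T2_X2, map_brA, T2inv_X1, T2inv_X2, sub_self, J.zero_mem]
  rw [← brA_flexible]
  exact bracketRel_X2_X1

/-- For every `x ∈ R`, the elements `T₁(T₁⁻(x)) − x`, `T₁⁻(T₁(x)) − x`, `T₂(T₂⁻(x)) − x` and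
`T₂⁻(T₂(x)) − x` belong to `J`; consequently the induced endomorphisms `τ₁, τ₂` of `B = R/J`
are `F`-algebra automorphisms, with inverses induced by `T₁⁻` and `T₂⁻` respectively. -/
theorem T_inverse_mod_J :
    (∀ x : R, T1 (T1inv x) - x ∈ J ∧ T1inv (T1 x) - x ∈ J ∧
              T2 (T2inv x) - x ∈ J ∧ T2inv (T2 x) - x ∈ J) ∧
    ∃ τ1 τ1inv τ2 τ2inv : B →ₐ[F] B,
      τ1.comp pi = pi.comp T1 ∧ τ1inv.comp pi = pi.comp T1inv ∧
      τ2.comp pi = pi.comp T2 ∧ τ2inv.comp pi = pi.comp T2inv ∧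
      τ1.comp τ1inv = AlgHom.id F B ∧ τ1inv.comp τ1 = AlgHom.id F B ∧
      τ2.comp τ2inv = AlgHom.id F B ∧ τ2inv.comp τ2 = AlgHom.id F B :=
  ⟨fun x => ⟨T1_T1inv_sub_mem_J x, T1inv_T1_sub_mem_J x, T2_T2inv_sub_mem_J x,
      T2inv_T2_sub_mem_J x⟩,
    quotMap J T1 T1_mem_J, quotMap J T1inv T1inv_mem_J, quotMap J T2 T2_mem_J,
    quotMap J T2inv T2inv_mem_J,
    quotMap_comp_mkAlgHom _ _, quotMap_comp_mkAlgHom _ _, quotMap_comp_mkAlgHom _ _,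
    quotMap_comp_mkAlgHom _ _,
    quotMap_comp_quotMap_eq_id _ _ T1_T1inv_sub_mem_J,
    quotMap_comp_quotMap_eq_id _ _ T1inv_T1_sub_mem_J,
    quotMap_comp_quotMap_eq_id _ _ T2_T2inv_sub_mem_J,
    quotMap_comp_quotMap_eq_id _ _ T2inv_T2_sub_mem_J⟩
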